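/- For a finite set S of n points in general position in ℝ² and any q ∈ ℝ², let B(q;S) denote the number of pairs {x_i,x_j} ⊆ S such that q lies in the closed disk with diameter x_ix_j, and let T(q;S) denote the number of triples {x_i,x_j,x_k} ⊆ S such that q lies in the closed triangle x_ix_jx_k. Then (n-2)·B(q;S) ≥ 2·T(q;S). -/

import Mathlib

/-! If `q` lies in the triangle `abc` but in neither of the disks with diameters `ab` and `bc`,
then `⟪a - q, b - q⟫ > 0` and `⟪c - q, b - q⟫ > 0`, so `b ≠ q` and `a`, `b`, `c` all lie in the
open half-plane `⟪x - q, b - q⟫ > 0`, and so does their convex hull; but `q` does not. Hence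
each triangle containing `q` has at least two edges whose diameter disks contain `q`. Double
counting the incidences (triangle containing `q`, such edge of it) then gives the bound, since a
pair of points of `S` is an edge of at most `n - 2` triangles. -/
open scoped RealInnerProductSpace Classical

/-- Number of (unordered) pairs of points of `S` whose diameter disk contains `q`. -/
noncomputable def diskPairCount (q : EuclideanSpace ℝ (Fin 2))
    (S : Finset (EuclideanSpace ℝ (Fin 2))) : ℕ :=
  ((S.powersetCard 2).filter
    (fun P => ∃ x ∈ P, ∃ y ∈ P, x ≠ y ∧ ⟪x - q, y - q⟫ ≤ 0)).card

/-- Number of triples of points of `S` whose closed triangle contains `q`. -/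
noncomputable def triangleCount (q : EuclideanSpace ℝ (Fin 2))
    (S : Finset (EuclideanSpace ℝ (Fin 2))) : ℕ :=
  ((S.powersetCard 3).filter (fun T => q ∈ convexHull ℝ (T : Set _))).card

theorem Finset.card_filter_superset_powersetCard_succ_le {α : Type*} {s t : Finset α}
    (ht : t ⊆ s) : ((s.powersetCard (t.card + 1)).filter (t ⊆ ·)).card ≤ s.card - t.card := by
  calc ((s.powersetCard (t.card + 1)).filter (t ⊆ ·)).card
      ≤ ((s \ t).image (insert · t)).card := by
        refine card_le_card fun u hu => ?_
        obtain ⟨⟨hus, hu_card⟩, htu⟩ := by simpa only [mem_filter, mem_powersetCard] using hu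
        obtain ⟨a, hat, rfl⟩ := exists_eq_insert_iff.mpr ⟨htu, hu_card.symm⟩
        exact mem_image_of_mem _ (mem_sdiff.mpr ⟨hus (mem_insert_self a t), hat⟩)
    _ ≤ (s \ t).card := card_image_le
    _ = s.card - t.card := card_sdiff_of_subset ht

section

variable {E : Type*} [NormedAddCommGroup E] [InnerProductSpace ℝ E]

theorem inner_sub_nonpos_or_inner_sub_nonpos_of_mem_convexHull {a b c q : E}
    (hq : q ∈ convexHull ℝ {a, b, c}) : ⟪a - q, b - q⟫ ≤ 0 ∨ ⟪b - q, c - q⟫ ≤ 0 := by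
  by_contra! h
  obtain ⟨hab, hbc⟩ := h
  have hb : 0 < ⟪b - q, b - q⟫ := by
    refine real_inner_self_pos.mpr fun hbq => ?_
    simp [hbq] at hab
  have hH : Convex ℝ {x : E | ⟪b - q, q⟫ < ⟪b - q, x⟫} :=
    convex_halfSpace_gt (innerSL ℝ (b - q)).isLinear _
  have mem_of_pos : ∀ v, 0 < ⟪b - q, v - q⟫ → ⟪b - q, q⟫ < ⟪b - q, v⟫ := fun v hv => by
    rw [inner_sub_right] at hv
    linarith
  have hsub : {a, b, c} ⊆ {x : E | ⟪b - q, q⟫ < ⟪b - q, x⟫} := by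
    simp only [Set.insert_subset_iff, Set.singleton_subset_iff]
    exact ⟨mem_of_pos a (by rwa [real_inner_comm]), mem_of_pos b hb, mem_of_pos c hbc⟩
  simpa using convexHull_min hsub hH hq

noncomputable def diskPairs (q : E) (S : Finset E) : Finset (Finset E) :=
  (S.powersetCard 2).filter (fun P => ∃ x ∈ P, ∃ y ∈ P, x ≠ y ∧ ⟪x - q, y - q⟫ ≤ 0)

noncomputable def triangles (q : E) (S : Finset E) : Finset (Finset E) :=
  (S.powersetCard 3).filter (fun T => q ∈ convexHull ℝ (T : Set E))

theorem filter_diskPairs_subset {q : E} {S T : Finset E} (hTS : T ⊆ S) :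
    (diskPairs q S).filter (· ⊆ T) = diskPairs q T := by
  ext P
  simp only [diskPairs, Finset.mem_filter, Finset.mem_powersetCard]
  exact ⟨fun ⟨⟨⟨_, hP⟩, hgood⟩, hPT⟩ => ⟨⟨hPT, hP⟩, hgood⟩,
    fun ⟨⟨hPT, hP⟩, hgood⟩ => ⟨⟨⟨hPT.trans hTS, hP⟩, hgood⟩, hPT⟩⟩

theorem pair_mem_diskPairs {q x y : E} {S : Finset E} (hx : x ∈ S) (hy : y ∈ S) (hxy : x ≠ y)
    (hq : ⟪x - q, y - q⟫ ≤ 0) : {x, y} ∈ diskPairs q S := by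
  simp only [diskPairs, Finset.mem_filter, Finset.mem_powersetCard]
  exact ⟨⟨by simp [Finset.insert_subset_iff, hx, hy], Finset.card_pair hxy⟩,
    x, by simp, y, by simp, hxy, hq⟩

theorem two_le_card_diskPairs_of_mem_convexHull {q : E} {T : Finset E} (hT : T.card = 3)
    (hq : q ∈ convexHull ℝ (T : Set E)) : 2 ≤ (diskPairs q T).card := by
  obtain ⟨a, b, c, hab, hac, hbc, rfl⟩ := Finset.card_eq_three.mp hT
  have habc : q ∈ convexHull ℝ ({a, b, c} : Set E) := by simpa using hq
  have hbca : q ∈ convexHull ℝ ({b, c, a} : Set E) := by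
    rwa [Set.pair_comm c, Set.insert_comm b]
  have hcab : q ∈ convexHull ℝ ({c, a, b} : Set E) := by
    rwa [Set.insert_comm c, Set.pair_comm c]
  have ne {x y z : E} (hxy : x ≠ y) (hxz : x ≠ z) : ({x, y} : Finset E) ≠ {y, z} := fun h => by
    have hx : x ∈ ({y, z} : Finset E) := h ▸ Finset.mem_insert_self x {y}
    simp [hxy, hxz] at hx
  have mem_ab := pair_mem_diskPairs (q := q) (by simp) (by simp : b ∈ ({a, b, c} : Finset E)) hab
  have mem_bc := pair_mem_diskPairs (q := q) (by simp) (by simp : c ∈ ({a, b, c} : Finset E)) hbc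
  have mem_ca := pair_mem_diskPairs (q := q) (by simp) (by simp : a ∈ ({a, b, c} : Finset E))
    hac.symm
  refine Finset.one_lt_card.mpr ?_
  by_cases h_ab : ⟪a - q, b - q⟫ ≤ 0
  · rcases inner_sub_nonpos_or_inner_sub_nonpos_of_mem_convexHull hbca with h_bc | h_ca
    · exact ⟨_, mem_ab h_ab, _, mem_bc h_bc, ne hab hac⟩
    · exact ⟨_, mem_ca h_ca, _, mem_ab h_ab, ne hac.symm hbc.symm⟩
  · have h_bc := (inner_sub_nonpos_or_inner_sub_nonpos_of_mem_convexHull habc).resolve_left h_ab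
    have h_ca := (inner_sub_nonpos_or_inner_sub_nonpos_of_mem_convexHull hcab).resolve_right h_ab
    exact ⟨_, mem_bc h_bc, _, mem_ca h_ca, ne hbc hab.symm⟩

theorem two_mul_card_triangles_le_mul_card_diskPairs (q : E) (S : Finset E) :
    2 * (triangles q S).card ≤ (S.card - 2) * (diskPairs q S).card := by
  have h := Finset.card_mul_le_card_mul (fun T P => P ⊆ T) (m := 2) (n := S.card - 2)
    (s := triangles q S) (t := diskPairs q S) ?_ ?_
  · rwa [mul_comm, mul_comm (S.card - 2)]
  · intro T hT
    obtain ⟨⟨hTS, hT3⟩, hqT⟩ := by simpa only [triangles, Finset.mem_filter,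
      Finset.mem_powersetCard] using hT
    rw [Finset.bipartiteAbove, filter_diskPairs_subset hTS]
    exact two_le_card_diskPairs_of_mem_convexHull hT3 hqT
  · intro P hP
    obtain ⟨⟨hPS, hP2⟩, -⟩ := by simpa only [diskPairs, Finset.mem_filter,
      Finset.mem_powersetCard] using hP
    have htri : triangles q S ⊆ S.powersetCard (P.card + 1) := hP2 ▸ Finset.filter_subset _ _
    calc (Finset.bipartiteBelow (fun T P => P ⊆ T) (triangles q S) P).card
        ≤ ((S.powersetCard (P.card + 1)).filter (P ⊆ ·)).card :=
          Finset.card_le_card (Finset.filter_subset_filter _ htri)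
      _ ≤ S.card - 2 := hP2 ▸ Finset.card_filter_superset_powersetCard_succ_le hPS

end

-- The coercion `(T : Set _)` in `triangleCount` elaborates as a monadic map of
-- `S.powersetCard 3` into `Finset (Set _)`, injective since `Finset` coerces injectively.
theorem triangleCount_eq_card_triangles (q : EuclideanSpace ℝ (Fin 2))
    (S : Finset (EuclideanSpace ℝ (Fin 2))) : triangleCount q S = (triangles q S).card := by
  simp only [triangleCount, triangles, Finset.bind_def, Finset.sup_eq_biUnion, Finset.pure_def,
    Finset.biUnion_singleton]
  rw [Finset.filter_image]
  exact Finset.card_image_of_injective _ Finset.coe_injective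

theorem diskPairCount_eq_card_diskPairs (q : EuclideanSpace ℝ (Fin 2))
    (S : Finset (EuclideanSpace ℝ (Fin 2))) : diskPairCount q S = (diskPairs q S).card := by
  unfold diskPairCount diskPairs
  convert rfl

theorem diskPairCount_vs_triangleCount_general
    (S : Finset (EuclideanSpace ℝ (Fin 2))) (n : ℕ) (hn : S.card = n)
    (q : EuclideanSpace ℝ (Fin 2)) :
    2 * triangleCount q S ≤ (n - 2) * diskPairCount q S := by
  rw [triangleCount_eq_card_triangles, diskPairCount_eq_card_diskPairs, ← hn]
  exact two_mul_card_triangles_le_mul_card_diskPairs q S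

theorem diskPairCount_vs_triangleCount
    (S : Finset (EuclideanSpace ℝ (Fin 2))) (n : ℕ) (hn : S.card = n) (h3 : 3 ≤ n)
    (hgp : ∀ x ∈ S, ∀ y ∈ S, ∀ z ∈ S, x ≠ y → y ≠ z → x ≠ z →
      ¬ Collinear ℝ ({x, y, z} : Set (EuclideanSpace ℝ (Fin 2))))
    (q : EuclideanSpace ℝ (Fin 2)) :
    2 * triangleCount q S ≤ (n - 2) * diskPairCount q S :=
  diskPairCount_vs_triangleCount_general S n hn q
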